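/- Let b = 0 or 1 and fix a contraction γ : G → H = G/S₀. Let S ∈ A^b_G and T ∈ A^b_H. Then: (a) γ_* γ* T = T; (b) T ⊆ γ_* S if and only if γ* T ⊆ S; (c) γ* T is the smallest (with respect to inclusion) element of A^b_G whose image under γ_* equals T; (d) γ_* : A^b_G → A^b_H is a quotient of posets; (e) if S₀ ⊆ G_br then γ_* : A^b_G → A^b_H is an isomorphism of posets. -/

import Mathlib

/-!
Common framework: finite vertex-weighted multigraphs (loops and multiple edges
allowed), generalized orientations, divisors, contractions, and poset gadgets.

A graph is encoded by a finite set `V ⊆ ℕ` of vertices, a finite set `E ⊆ ℕ`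
of edges, an "ends" function assigning to each edge its ordered pair of
end-vertices (the two components encode the two half-edges), and a weight
function `w : ℕ → ℕ`.

A generalized orientation is a function `ℕ → Option EdgeDir`, where `none`
means the edge is absent (an orientation on a spanning subgraph `G − S` takes
the value `none` exactly on edges outside `E \ S`), `fwd`/`bwd` give the edge a
single direction, and `bi` makes the edge bioriented.
-/

open scoped Classical
open Finset

/-- Direction of an edge under a generalized orientation. -/
inductive EdgeDir : Type
  | fwd
  | bwd
  | bi
deriving DecidableEq

/-- Generalized orientation data. -/
abbrev Orient : Type := ℕ → Option EdgeDir

/-- The number of ending (target) half-edges at the vertex `v` of an edge with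
end-pair `p`, given its direction `d`.  A one-way oriented edge has exactly
one target end; a bioriented edge has both ends as targets. -/
def dirT : Option EdgeDir → ℕ × ℕ → ℕ → ℕ
  | none, _, _ => 0
  | some EdgeDir.fwd, p, v => if p.2 = v then 1 else 0
  | some EdgeDir.bwd, p, v => if p.1 = v then 1 else 0
  | some EdgeDir.bi, p, v => (if p.1 = v then 1 else 0) + (if p.2 = v then 1 else 0)

/-- Restriction of orientation data to the set `D` of kept edges. -/
def restr (O : Orient) (D : Finset ℕ) : Orient := fun e => if e ∈ D then O e else none

/-- A finite vertex-weighted multigraph. -/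
structure WGraph : Type where
  V : Finset ℕ
  E : Finset ℕ
  ends : ℕ → ℕ × ℕ
  w : ℕ → ℕ
  ends_mem : ∀ e ∈ E, (ends e).1 ∈ V ∧ (ends e).2 ∈ V

namespace WGraph

variable (G : WGraph)

/-- Edge set of the induced subgraph `(G−S)[Z]`: edges of `G − S` with both
ends in `Z`. -/
def indEdges (S Z : Finset ℕ) : Finset ℕ :=
  (G.E \ S).filter fun e => (G.ends e).1 ∈ Z ∧ (G.ends e).2 ∈ Z

/-- The cut `E(Z, Zᶜ)` in `G − S`: edges of `G − S` with exactly one end in `Z`. -/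
def cutEdges (S Z : Finset ℕ) : Finset ℕ :=
  (G.E \ S).filter fun e =>
    ((G.ends e).1 ∈ Z ∧ (G.ends e).2 ∉ Z) ∨ ((G.ends e).1 ∉ Z ∧ (G.ends e).2 ∈ Z)

/-- Adjacency via an edge belonging to `F ∩ E`. -/
def adjOn (F : Finset ℕ) (u v : ℕ) : Prop :=
  ∃ e ∈ F ∩ G.E, G.ends e = (u, v) ∨ G.ends e = (v, u)

/-- Number of connected components of the subgraph with vertex set `W` and
edge set `F`. -/
noncomputable def ncomp (W F : Finset ℕ) : ℕ :=
  Nat.card (Quot (fun u v : {x : ℕ // x ∈ W} => G.adjOn F u.1 v.1))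

/-- The subgraph with vertex set `W` and edge set `F` is connected. -/
def ConnSub (W F : Finset ℕ) : Prop := G.ncomp W F = 1

/-- `G` is connected. -/
def Connected : Prop := G.ConnSub G.V G.E

/-- Genus of the subgraph with vertex set `W` and edge set `F`:
`∑_{v ∈ W} w(v) − |W| + |F| + c`. -/
noncomputable def subGenus (W F : Finset ℕ) : ℤ :=
  (∑ v ∈ W, (G.w v : ℤ)) - (W.card : ℤ) + (((F ∩ G.E).card : ℤ)) + (G.ncomp W F : ℤ)

/-- The genus of `G`. -/
noncomputable def genus : ℤ := G.subGenus G.V G.E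

/-- The degree of a vertex: the number of half-edges having `v` as end. -/
def deg (v : ℕ) : ℕ :=
  ∑ e ∈ G.E, ((if (G.ends e).1 = v then 1 else 0) + (if (G.ends e).2 = v then 1 else 0))

/-- `e` is a bridge of `G − S`: removing it increases the number of connected
components. -/
def IsBridge (S : Finset ℕ) (e : ℕ) : Prop :=
  e ∈ G.E \ S ∧ G.ncomp G.V (G.E \ S) < G.ncomp G.V (G.E \ insert e S)

/-- The set of bridges of `G − S`. -/
noncomputable def bridges (S : Finset ℕ) : Finset ℕ := (G.E \ S).filter (G.IsBridge S)

/-- `T` is a cut of `G`, i.e. `T = E(Z, Zᶜ)` for some `∅ ⊊ Z ⊊ V`. -/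
def IsCut (T : Finset ℕ) : Prop :=
  ∃ Z, Z ⊆ G.V ∧ Z.Nonempty ∧ Z ≠ G.V ∧ T = G.cutEdges ∅ Z

/-- `W` is (the vertex set of) a connected component of `G − S`. -/
def IsCompOf (S W : Finset ℕ) : Prop :=
  W ⊆ G.V ∧ W.Nonempty ∧ G.ConnSub W (G.indEdges S W) ∧ G.cutEdges S W = ∅

/-- The poset `A^b_G`: for `b = 0` the sets `S ⊆ E` with `G − S` bridgeless,
for `b = 1` the sets `S ⊆ E` with `G − S` connected. -/
def Ab (b : ℕ) (S : Finset ℕ) : Prop :=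
  S ⊆ G.E ∧ ((b = 0 ∧ ∀ e, ¬ G.IsBridge S e) ∨ (b = 1 ∧ G.ConnSub G.V (G.E \ S)))

/-- `G` is a stable graph of genus `g`: connected, of genus `g`, and every
vertex of weight `0` has degree at least `3`. -/
noncomputable def Stable (g : ℕ) : Prop :=
  G.Connected ∧ G.genus = (g : ℤ) ∧ ∀ v ∈ G.V, G.w v = 0 → 3 ≤ G.deg v

/-! ### Generalized orientations on spanning subgraphs -/

/-- `O` is orientation data for the spanning subgraph `G − S` (it is defined
exactly on the edges of `G − S`). -/
def IsOrientOn (S : Finset ℕ) (O : Orient) : Prop :=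
  ∀ e, O e ≠ none ↔ e ∈ G.E \ S

/-- The set of bioriented edges of `O`. -/
def biE (O : Orient) : Finset ℕ := G.E.filter fun e => O e = some EdgeDir.bi

/-- `t^O_v`: the number of half-edges having `v` as target. -/
def tOr (O : Orient) (v : ℕ) : ℕ := ∑ e ∈ G.E, dirT (O e) (G.ends e) v

/-- `t^O(Z)`: the number of edges of `G − S` not contained in `(G−S)[Z]`
having a target in `Z`. -/
def tCut (S : Finset ℕ) (O : Orient) (Z : Finset ℕ) : ℕ :=
  ∑ e ∈ (G.E \ S) \ G.indEdges S Z, ∑ v ∈ Z, dirT (O e) (G.ends e) v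

/-- The divisor `d^O` of a `b`-orientation `O` on `G − S`:
`d^O_v = w(v) − 1 + t^O_v` if `G − S` has edges, and `d^O_v = w(v) − 1 + b`
otherwise; it is supported on `V`. -/
noncomputable def divOr (S : Finset ℕ) (b : ℕ) (O : Orient) : ℕ → ℤ :=
  fun v => if v ∈ G.V then
      (if G.E \ S = ∅ then (G.w v : ℤ) - 1 + (b : ℤ) else (G.w v : ℤ) - 1 + (G.tOr O v : ℤ))
    else 0

/-- Equivalence of generalized orientations on `G − S`:  both are orientations
on `G − S` and they have the same divisor. -/
noncomputable def equivOr (S : Finset ℕ) (b : ℕ) (O O' : Orient) : Prop :=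
  G.IsOrientOn S O ∧ G.IsOrientOn S O' ∧ G.divOr S b O = G.divOr S b O'

/-- `O` is a totally cyclic orientation on `G − S`: every nonempty cut
`E(Z,Zᶜ)` contains an edge with target in `Z` and an edge with target in `Zᶜ`. -/
def TotCyc (S : Finset ℕ) (O : Orient) : Prop :=
  ∀ Z : Finset ℕ, Z ⊆ G.V → Z.Nonempty → Z ≠ G.V → (G.cutEdges S Z).Nonempty →
    (∃ e ∈ G.cutEdges S Z, ∃ v ∈ Z, 0 < dirT (O e) (G.ends e) v) ∧
    (∃ e ∈ G.cutEdges S Z, ∃ v ∈ G.V \ Z, 0 < dirT (O e) (G.ends e) v)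

/-- `O` is `e₀`-rooted on `G − S`: for every `Z ⊊ V` with `e₀` an edge of
`(G−S)[Z]`, the cut `E(Z,Zᶜ)` contains an edge with target in `Zᶜ`. -/
def RootedAt (S : Finset ℕ) (O : Orient) (e₀ : ℕ) : Prop :=
  ∀ Z : Finset ℕ, Z ⊆ G.V → Z ≠ G.V → e₀ ∈ G.indEdges S Z →
    ∃ e ∈ G.cutEdges S Z, ∃ v ∈ G.V \ Z, 0 < dirT (O e) (G.ends e) v

/-- `O` is a rooted `1`-orientation on `G − S`:  it has exactly one bioriented
edge, at which it is rooted.  By convention, if `G − S` consists of a single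
vertex (and no edges), the empty orientation is rooted. -/
def Rooted1 (S : Finset ℕ) (O : Orient) : Prop :=
  (∃ e₀, G.biE O = {e₀} ∧ G.RootedAt S O e₀) ∨ (G.E \ S = ∅ ∧ G.V.card = 1)

/-- `O ∈ 𝒪^b(G−S)`:  for `b = 0`, a totally cyclic orientation on `G − S`;
for `b = 1`, a rooted `1`-orientation on `G − S`. -/
def MemOb (S : Finset ℕ) (b : ℕ) (O : Orient) : Prop :=
  G.IsOrientOn S O ∧
    ((b = 0 ∧ G.biE O = ∅ ∧ G.TotCyc S O) ∨ (b = 1 ∧ G.Rooted1 S O))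

/-- `O` is a `b`-orientation on `G − S` (exactly `b` bioriented edges; by
convention the empty orientation on a one-vertex edgeless graph counts as a
`1`-orientation). -/
def IsbOr (S : Finset ℕ) (b : ℕ) (O : Orient) : Prop :=
  G.IsOrientOn S O ∧
    ((G.biE O).card = b ∨ (G.E \ S = ∅ ∧ G.V.card = 1 ∧ b = 1))

/-! ### Posets of orientations on spanning subgraphs -/

/-- The order of `𝒪𝒫^b_G` on pairs `(S, O_S)`:  `(S,O_S) ≤ (T,O_T)` iff
`T ⊆ S` and the restriction of `O_T` to `G − S` is `O_S`. -/
def leOP (p q : Finset ℕ × Orient) : Prop :=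
  q.1 ⊆ p.1 ∧ restr q.2 (G.E \ p.1) = p.2

/-- The order of `𝒪̄𝒫^b_G` on pairs (representing classes): `(S,O̅_S) ≤ (T,O̅_T)`
iff `T ⊆ S` and some representative of `O̅_T` restricts on `G − S` to some
representative of `O̅_S`. -/
noncomputable def leOPbar (b : ℕ) (p q : Finset ℕ × Orient) : Prop :=
  q.1 ⊆ p.1 ∧ ∃ O', G.equivOr q.1 b O' q.2 ∧
    G.equivOr p.1 b (restr O' (G.E \ p.1)) p.2

/-- Equality in `𝒪̄𝒫^b_G`: same subgraph and equivalent orientations. -/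
noncomputable def eqOP (b : ℕ) (p q : Finset ℕ × Orient) : Prop :=
  p.1 = q.1 ∧ G.equivOr p.1 b p.2 q.2

/-- Membership in `𝒪𝒫^b_G`. -/
def POb (b : ℕ) (p : Finset ℕ × Orient) : Prop :=
  G.Ab b p.1 ∧ G.MemOb p.1 b p.2

/-! ### Stable divisors -/

/-- Stable divisors on `G − S` of degree `g(G−S) − c(G−S) + b` (`b = 0, 1`):
for `b = 1`, `G − S` is connected, the degree is `g(G−S)` and
`|d_Z| > g(Z) − 1` for every `Z ⊆ V`; for `b = 0`, the restriction of `d` to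
every connected component `W` of `G − S` has degree `g(W) − 1` and satisfies
`|d_Z| > g(Z) − 1` for every `∅ ≠ Z ⊊ W`. -/
noncomputable def StableDiv (S : Finset ℕ) (b : ℕ) (d : ℕ → ℤ) : Prop :=
  (∀ v, v ∉ G.V → d v = 0) ∧
  ((b = 1 ∧ G.ConnSub G.V (G.E \ S) ∧
      (∑ v ∈ G.V, d v) = G.subGenus G.V (G.E \ S) ∧
      ∀ Z ⊆ G.V, G.subGenus Z (G.indEdges S Z) - 1 < ∑ v ∈ Z, d v) ∨
   (b = 0 ∧ ∀ W, G.IsCompOf S W →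
      (∑ v ∈ W, d v) = G.subGenus W (G.indEdges S W) - 1 ∧
      ∀ Z ⊆ W, Z.Nonempty → Z ≠ W →
        G.subGenus Z (G.indEdges S Z) - 1 < ∑ v ∈ Z, d v))

/-! ### Contractions -/

/-- The relation identifying the two ends of each edge in `S₀`. -/
def conRel (S₀ : Finset ℕ) (u v : ℕ) : Prop :=
  ∃ e ∈ S₀ ∩ G.E, G.ends e = (u, v) ∨ G.ends e = (v, u)

/-- Representative (the least element) of the class of `v` under the
equivalence generated by identifying the ends of the edges in `S₀`. -/
noncomputable def crep (S₀ : Finset ℕ) (v : ℕ) : ℕ :=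
  sInf {u | Relation.EqvGen (G.conRel S₀) u v}

/-- The (weighted) edge contraction `G/S₀`: every connected component of the
subgraph spanned by `S₀` is contracted to a single vertex, whose weight is the
genus of that component; `E(G/S₀) = E(G) \ S₀`. -/
noncomputable def contract (S₀ : Finset ℕ) : WGraph where
  V := G.V.image (G.crep S₀)
  E := G.E \ S₀
  ends := fun e => (G.crep S₀ (G.ends e).1, G.crep S₀ (G.ends e).2)
  w := fun v =>
    (G.subGenus (G.V.filter fun u => G.crep S₀ u = v)
      (G.indEdges (G.E \ S₀) (G.V.filter fun u => G.crep S₀ u = v))).toNat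
  ends_mem := by
    intro e he
    rw [Finset.mem_sdiff] at he
    exact ⟨Finset.mem_image_of_mem _ (G.ends_mem e he.1).1,
           Finset.mem_image_of_mem _ (G.ends_mem e he.1).2⟩

/-- Deletion of the edges in `T` (a spanning subgraph, as a graph). -/
def ddel (T : Finset ℕ) : WGraph where
  V := G.V
  E := G.E \ T
  ends := G.ends
  w := G.w
  ends_mem := fun e he => G.ends_mem e (Finset.mem_sdiff.mp he).1

/-- Pullback `γ* T` of an edge set along the contraction `γ : G → G/S₀`:
`T ∪ (G−T)_br` for `b = 0`, and `T` for `b = 1`. -/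
noncomputable def pullStar (b : ℕ) (T : Finset ℕ) : Finset ℕ :=
  if b = 0 then T ∪ G.bridges T else T

/-- Pushforward of a divisor along the contraction `γ : G → G/S₀`:
`(γ_* d)_v = ∑_{z ∈ γ⁻¹(v)} d_z`. -/
noncomputable def pushDiv (S₀ : Finset ℕ) (d : ℕ → ℤ) : ℕ → ℤ :=
  fun v => ∑ z ∈ G.V.filter (fun u => G.crep S₀ u = v), d z

/-- The divisor `c^{γ,S}` on `G/S₀`: `c^{γ,S}_v = #{e ∈ S₀ ∩ S : γ(e) = v}`. -/
noncomputable def cGamma (S₀ S : Finset ℕ) : ℕ → ℤ :=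
  fun v => ((((S₀ ∩ S) ∩ G.E).filter (fun e => G.crep S₀ (G.ends e).1 = v)).card : ℤ)

/-- The relation "`q` is a value of `γ̄_*` at `p`" for the contraction
`γ : G → G/S₀` acting on classes of orientations: `q` is the restriction to
`(G/S₀) − γ_* S` of a representative of the class of `p` having no bioriented
edge in `S₀` (when `(G/S₀) − γ_*S` has no edges, any representative serves). -/
noncomputable def pushRel (S₀ : Finset ℕ) (b : ℕ) (p q : Finset ℕ × Orient) : Prop :=
  ∃ O', G.equivOr p.1 b O' p.2 ∧
    ((∀ e ∈ S₀, O' e ≠ some EdgeDir.bi) ∨ G.E \ (S₀ ∪ p.1) = ∅) ∧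
    q.1 = p.1 \ S₀ ∧ q.2 = restr O' (G.E \ (S₀ ∪ p.1))

/-! ### Isomorphisms and directed reachability -/

/-- `(fV, fE)` is an isomorphism from `G` to `H`. -/
def IsoMaps (H : WGraph) (fV fE : ℕ → ℕ) : Prop :=
  Set.BijOn fV ↑G.V ↑H.V ∧ Set.BijOn fE ↑G.E ↑H.E ∧
  (∀ e ∈ G.E, H.ends (fE e) = (fV (G.ends e).1, fV (G.ends e).2) ∨
              H.ends (fE e) = (fV (G.ends e).2, fV (G.ends e).1)) ∧
  (∀ v ∈ G.V, H.w (fV v) = G.w v)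

/-- `G` and `H` are isomorphic graphs. -/
def Iso (H : WGraph) : Prop := ∃ fV fE, G.IsoMaps H fV fE

/-- The edge-contraction relation: `G ≤ H` iff `H = G/S₀` (up to isomorphism)
for some `S₀ ⊆ E(G)`. -/
noncomputable def contractLE (H : WGraph) : Prop :=
  ∃ S₀ ⊆ G.E, (G.contract S₀).Iso H

/-- One step from `u` to `v` along an `O`-directed edge (a bioriented edge may
be traversed in both directions). -/
def dirStep (O : Orient) (u v : ℕ) : Prop :=
  ∃ e ∈ G.E,
    (O e = some EdgeDir.fwd ∧ G.ends e = (u, v)) ∨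
    (O e = some EdgeDir.bwd ∧ G.ends e = (v, u)) ∨
    (O e = some EdgeDir.bi ∧ (G.ends e = (u, v) ∨ G.ends e = (v, u)))

/-- There is an `O`-directed path from the (bioriented) edge `e` to the
vertex `v`: a directed path starting at one of the ends of `e` and ending
at `v`. -/
def dirReachFromEdge (O : Orient) (e v : ℕ) : Prop :=
  ∃ u, ((G.ends e).1 = u ∨ (G.ends e).2 = u) ∧
    Relation.ReflTransGen (G.dirStep O) u v

end WGraph

/-! ### Generic poset gadgets (for sets with an order, modulo an equivalence) -/

/-- `le` is a partial order on `{a | P a}` modulo the identification `eqv`. -/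
def IsPartialOrderOnMod {α : Type*} (P : α → Prop) (eqv le : α → α → Prop) : Prop :=
  (∀ a, P a → le a a) ∧
  (∀ a b c, P a → P b → P c → le a b → le b c → le a c) ∧
  (∀ a b, P a → P b → le a b → le b a → eqv a b)

/-- `le` is a partial order on `{a | P a}`. -/
def IsPartialOrderOn {α : Type*} (P : α → Prop) (le : α → α → Prop) : Prop :=
  IsPartialOrderOnMod P (· = ·) le

/-- `a'` covers `a` in `{a | P a}` ordered by `le`, modulo `eqv`. -/
def CoversOnMod {α : Type*} (P : α → Prop) (eqv le : α → α → Prop) (a a' : α) : Prop :=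
  P a ∧ P a' ∧ le a a' ∧ ¬ eqv a a' ∧
    ∀ c, P c → le a c → le c a' → (eqv c a ∨ eqv c a')

/-- `ρ` is a rank on `{a | P a}` ordered by `le`, modulo `eqv`:  along every
covering relation it increases by exactly `1`. -/
def IsRankOnMod {α : Type*} (P : α → Prop) (eqv le : α → α → Prop) (ρ : α → ℕ) : Prop :=
  ∀ a a', CoversOnMod P eqv le a a' → ρ a' = ρ a + 1

/-- `a'` covers `a` in `{a | P a}` ordered by `le`. -/
def CoversOn {α : Type*} (P : α → Prop) (le : α → α → Prop) : α → α → Prop :=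
  CoversOnMod P (· = ·) le

/-- `ρ` is a rank on `{a | P a}` ordered by `le`. -/
def IsRankOn {α : Type*} (P : α → Prop) (le : α → α → Prop) (ρ : α → ℕ) : Prop :=
  IsRankOnMod P (· = ·) le ρ

/-- `f` is a quotient of posets from `({a | P a}, lea)` onto `({b | Q b}, leb)`:
an order-preserving surjection such that any relation downstairs lifts to a
relation upstairs. -/
def IsPosetQuotient {α β : Type*} (P : α → Prop) (Q : β → Prop)
    (lea : α → α → Prop) (leb : β → β → Prop) (f : α → β) : Prop :=
  (∀ a, P a → Q (f a)) ∧
  (∀ a a', P a → P a' → lea a a' → leb (f a) (f a')) ∧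
  (∀ b, Q b → ∃ a, P a ∧ f a = b) ∧
  (∀ b b', Q b → Q b' → leb b b' →
    ∃ a a', P a ∧ P a' ∧ f a = b ∧ f a' = b' ∧ lea a a')

/-! ### Structures over the moduli of stable graphs -/

/-- Pairs `(G, S)` with `G` stable of genus `g` and `S ∈ A^b_G`. -/
noncomputable def PairStab (g b : ℕ) (p : WGraph × Finset ℕ) : Prop :=
  p.1.Stable g ∧ p.1.Ab b p.2

/-- Isomorphism of pairs `(G, S)`. -/
def PairIso (p q : WGraph × Finset ℕ) : Prop :=
  ∃ fV fE, p.1.IsoMaps q.1 fV fE ∧ p.2.image fE = q.2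

/-- The order on `A^b_g`: `(G,S) ≤ (H,T)` iff there is a contraction
`γ : G → H` (a contraction of `G` followed by an isomorphism onto `H`) with
`γ* T ⊆ S`. -/
noncomputable def AgLE (b : ℕ) (p q : WGraph × Finset ℕ) : Prop :=
  ∃ S₀ ⊆ p.1.E, ∃ fV fE, (p.1.contract S₀).IsoMaps q.1 fV fE ∧
    p.1.pullStar b (((p.1.contract S₀).E).filter fun e => fE e ∈ q.2) ⊆ p.2

/-- Triples `(G, S, O̅_S)` with `G` stable of genus `g`, `S ∈ A^b_G` and
`O_S ∈ 𝒪^b(G−S)` (representing elements of `𝒪̄𝒫^b_g`). -/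
noncomputable def TripP (g b : ℕ) (x : WGraph × Finset ℕ × Orient) : Prop :=
  x.1.Stable g ∧ x.1.Ab b x.2.1 ∧ x.1.MemOb x.2.1 b x.2.2

/-- Identification of triples: an isomorphism of the underlying graphs
carrying the subgraph and the class of the orientation (i.e. its divisor) of
one to the other. -/
noncomputable def TripEq (b : ℕ) (x y : WGraph × Finset ℕ × Orient) : Prop :=
  ∃ fV fE, x.1.IsoMaps y.1 fV fE ∧ x.2.1.image fE = y.2.1 ∧
    ∀ v ∈ x.1.V, y.1.divOr y.2.1 b y.2.2 (fV v) = x.1.divOr x.2.1 b x.2.2 v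

/-- The order on `𝒪̄𝒫^b_g`: `(G, O̅_S) ≤ (H, O̅_T)` iff there is a contraction
`γ : G → H` with `γ* T ⊆ S` and `γ̄_* O̅_S ≤ O̅_T`, the latter meaning that the
restriction of `O̅_T` to `H − γ_* S` equals `γ̄_* O̅_S` (compared through the
isomorphism, via the divisors). -/
noncomputable def OPgLE (b : ℕ) (x y : WGraph × Finset ℕ × Orient) : Prop :=
  ∃ S₀ ⊆ x.1.E, ∃ fV fE, (x.1.contract S₀).IsoMaps y.1 fV fE ∧
    x.1.pullStar b (((x.1.contract S₀).E).filter fun e => fE e ∈ y.2.1) ⊆ x.2.1 ∧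
    ∃ O', x.1.equivOr x.2.1 b O' x.2.2 ∧
      ((∀ e ∈ S₀, O' e ≠ some EdgeDir.bi) ∨ x.1.E \ (S₀ ∪ x.2.1) = ∅) ∧
      ∀ v ∈ (x.1.contract S₀).V,
        y.1.divOr ((x.2.1 \ S₀).image fE) b
            (restr y.2.2 (y.1.E \ (x.2.1 \ S₀).image fE)) (fV v)
          = (x.1.contract S₀).divOr (x.2.1 \ S₀) b
              (restr O' (x.1.E \ (S₀ ∪ x.2.1))) v

/-!
Contracting the edges of `S₀` does not change the connectivity of `G − T` when `T` avoids `S₀`: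
the components of `(G/S₀) − T` are those of `G − T` with the edges of `S₀` collapsed. Hence `γ_*`
preserves `A^b`, and for `T ∈ A⁰_{G/S₀}` every bridge of `G − T` lies in `S₀`. The one genuinely
graph-theoretic fact is that deleting all bridges of `G − T` creates no new bridge, because a
bridge lies on no cycle; so `γ* T ∈ A^b_G`. Since bridges of `G − T` remain bridges of `G − S`
for `T ⊆ S`, `γ* T` is the least element of `A^b_G` containing `T`, and (a)–(d) follow formally.
If `S₀` consists of bridges of `G`, all elements of `A^b_G` meet `S₀` in the same set, so `S` is
recovered from `S \ S₀`.
-/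

open Relation

theorem Relation.EqvGen.eq_or_subtype {α : Type*} {p : α → Prop} {r : α → α → Prop}
    (hr : ∀ x y, r x y → p x ∧ p y) {x y : α} (h : EqvGen r x y) :
    x = y ∨ ∃ (hx : p x) (hy : p y), EqvGen (fun a b : Subtype p => r a b) ⟨x, hx⟩ ⟨y, hy⟩ := by
  induction h with
  | rel a b hab => exact Or.inr ⟨(hr a b hab).1, (hr a b hab).2, .rel _ _ hab⟩
  | refl a => exact Or.inl rfl
  | symm a b _ ih =>
    rcases ih with rfl | ⟨ha, hb, h⟩
    · exact Or.inl rfl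
    · exact Or.inr ⟨hb, ha, .symm _ _ h⟩
  | trans a b c _ _ ih₁ ih₂ =>
    rcases ih₁ with rfl | ⟨ha, hb, h₁⟩
    · exact ih₂
    rcases ih₂ with rfl | ⟨_, hc, h₂⟩
    · exact Or.inr ⟨ha, hb, h₁⟩
    · exact Or.inr ⟨ha, hc, .trans _ _ _ h₁ h₂⟩

theorem Relation.eqvGen_subtype_iff {α : Type*} {p : α → Prop} {r : α → α → Prop}
    (hr : ∀ x y, r x y → p x ∧ p y) {x y : α} (hx : p x) (hy : p y) :
    EqvGen (fun a b : Subtype p => r a b) ⟨x, hx⟩ ⟨y, hy⟩ ↔ EqvGen r x y := by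
  constructor
  · have key : ∀ a b : Subtype p, EqvGen (fun a b : Subtype p => r a b) a b → EqvGen r a b := by
      intro a b h
      induction h with
      | rel a b hab => exact .rel _ _ hab
      | refl a => exact .refl _
      | symm a b _ ih => exact .symm _ _ ih
      | trans a b c _ _ ih₁ ih₂ => exact .trans _ _ _ ih₁ ih₂
    exact key _ _
  · intro h
    rcases h.eq_or_subtype hr with rfl | ⟨_, _, h⟩
    · exact .refl _
    · exact h

theorem Quot.card_lt_card_iff_of_le {α : Type*} [Finite α] {r s : α → α → Prop} (hrs : r ≤ s) :
    Nat.card (Quot s) < Nat.card (Quot r) ↔ ∃ a b, s a b ∧ ¬EqvGen r a b := by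
  set f := Quot.factor r s hrs
  have hf : Function.Surjective f := Quot.ind fun a => ⟨Quot.mk r a, rfl⟩
  constructor
  · intro hlt
    by_contra! hsr
    have hinj : Function.Injective f := by
      intro x y
      induction x using Quot.ind
      induction y using Quot.ind
      intro hxy
      refine Quot.eqvGen_sound ((EqvGen.is_equivalence r).eqvGen_iff.mp ?_)
      exact EqvGen.mono hsr _ _ (Quot.eqvGen_exact hxy)
    exact hlt.ne (Nat.card_congr (Equiv.ofBijective f ⟨hinj, hf⟩)).symm
  · rintro ⟨a, b, hab, hnr⟩
    refine lt_of_le_of_ne (Nat.card_le_card_of_surjective f hf) fun hcard => hnr ?_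
    have hbij := (Nat.bijective_iff_surjective_and_card f).mpr ⟨hf, hcard.symm⟩
    exact Quot.eqvGen_exact (hbij.1 (Quot.sound hab))

theorem Quot.card_eq_of_retract {α β : Type*} {r : α → α → Prop} {s : β → β → Prop}
    (φ : α → β) (ψ : β → α) (hφ : ∀ a a', r a a' → EqvGen s (φ a) (φ a'))
    (hψ : ∀ b b', s b b' → EqvGen r (ψ b) (ψ b')) (hψφ : ∀ a, EqvGen r (ψ (φ a)) a)
    (hφψ : ∀ b, φ (ψ b) = b) :
    Nat.card (Quot r) = Nat.card (Quot s) :=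
  Nat.card_congr
    { toFun := Quot.lift (fun a => Quot.mk s (φ a)) fun a a' h => Quot.eqvGen_sound (hφ a a' h)
      invFun := Quot.lift (fun b => Quot.mk r (ψ b)) fun b b' h => Quot.eqvGen_sound (hψ b b' h)
      left_inv := Quot.ind fun a => Quot.eqvGen_sound (hψφ a)
      right_inv := Quot.ind fun b => congrArg (Quot.mk s) (hφψ b) }

namespace WGraph

variable {G : WGraph}

def Reach (G : WGraph) (F : Finset ℕ) : ℕ → ℕ → Prop := EqvGen (G.adjOn F)

theorem Reach.refl (F : Finset ℕ) (u : ℕ) : G.Reach F u u := EqvGen.refl u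

theorem Reach.symm {F : Finset ℕ} {u v : ℕ} (h : G.Reach F u v) : G.Reach F v u :=
  EqvGen.symm _ _ h

theorem Reach.trans {F : Finset ℕ} {u v w : ℕ} (h₁ : G.Reach F u v) (h₂ : G.Reach F v w) :
    G.Reach F u w :=
  EqvGen.trans _ _ _ h₁ h₂

theorem Reach.of_edge {F : Finset ℕ} {e : ℕ} (heF : e ∈ F) (heE : e ∈ G.E) :
    G.Reach F (G.ends e).1 (G.ends e).2 :=
  EqvGen.rel _ _ ⟨e, mem_inter.mpr ⟨heF, heE⟩, Or.inl rfl⟩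

theorem adjOn_mono {F F' : Finset ℕ} (h : F ⊆ F') {u v : ℕ} (huv : G.adjOn F u v) :
    G.adjOn F' u v := by
  obtain ⟨e, he, hends⟩ := huv
  exact ⟨e, inter_subset_inter_right h he, hends⟩

theorem Reach.mono {F F' : Finset ℕ} (h : F ⊆ F') {u v : ℕ} (huv : G.Reach F u v) :
    G.Reach F' u v :=
  EqvGen.mono (fun _ _ => adjOn_mono h) _ _ huv

theorem adjOn_mem {F : Finset ℕ} {u v : ℕ} (h : G.adjOn F u v) : u ∈ G.V ∧ v ∈ G.V := by
  obtain ⟨e, he, hends | hends⟩ := h <;> have := G.ends_mem e (mem_inter.mp he).2 <;>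
    rw [hends] at this
  exacts [this, this.symm]

theorem eqvGen_adjOn_subtype_iff {F : Finset ℕ} {u v : ℕ} (hu : u ∈ G.V) (hv : v ∈ G.V) :
    EqvGen (fun a b : {x // x ∈ G.V} => G.adjOn F a b) ⟨u, hu⟩ ⟨v, hv⟩ ↔ G.Reach F u v :=
  eqvGen_subtype_iff (p := (· ∈ G.V)) (r := G.adjOn F) (fun _ _ h => adjOn_mem h) hu hv

theorem reach_iff_mk_eq {F : Finset ℕ} {u v : ℕ} (hu : u ∈ G.V) (hv : v ∈ G.V) :
    G.Reach F u v ↔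
      Quot.mk (fun a b : {x // x ∈ G.V} => G.adjOn F a b) ⟨u, hu⟩ = Quot.mk _ ⟨v, hv⟩ := by
  rw [Quot.eq, eqvGen_adjOn_subtype_iff]

theorem connSub_iff {F : Finset ℕ} :
    G.ConnSub G.V F ↔ G.V.Nonempty ∧ ∀ u ∈ G.V, ∀ v ∈ G.V, G.Reach F u v := by
  rw [ConnSub, ncomp, Nat.card_eq_one_iff_unique, and_comm]
  refine and_congr ⟨fun ⟨q⟩ => ?_, fun ⟨v, hv⟩ => ⟨Quot.mk _ ⟨v, hv⟩⟩⟩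
    ⟨fun _ u hu v hv => (reach_iff_mk_eq hu hv).mpr (Subsingleton.elim _ _), fun h => ⟨?_⟩⟩
  · induction q using Quot.ind with
    | mk a => exact ⟨a, a.2⟩
  · rintro ⟨⟨u, hu⟩⟩ ⟨⟨v, hv⟩⟩
    exact (reach_iff_mk_eq hu hv).mp (h u hu v hv)

theorem ConnSub.mono {F F' : Finset ℕ} (h : G.ConnSub G.V F) (hF : F ⊆ F') :
    G.ConnSub G.V F' := by
  rw [connSub_iff] at h ⊢
  exact ⟨h.1, fun u hu v hv => (h.2 u hu v hv).mono hF⟩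

theorem ncomp_congr (W : Finset ℕ) {F F' : Finset ℕ} (h : F ∩ G.E = F' ∩ G.E) :
    G.ncomp W F = G.ncomp W F' := by
  simp only [ncomp, adjOn, h]

theorem isBridge_iff {S : Finset ℕ} {e : ℕ} :
    G.IsBridge S e ↔ e ∈ G.E \ S ∧ ¬G.Reach (G.E \ insert e S) (G.ends e).1 (G.ends e).2 := by
  refine and_congr_right fun he => ?_
  have heE := (mem_sdiff.mp he).1
  have hends := G.ends_mem e heE
  rw [ncomp, ncomp, Quot.card_lt_card_iff_of_le fun _ _ =>
    adjOn_mono (sdiff_subset_sdiff subset_rfl (subset_insert e S))]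
  constructor
  · rintro ⟨a, b, ⟨g, hg, hab⟩, hnr⟩ hreach
    rw [eqvGen_adjOn_subtype_iff a.2 b.2] at hnr
    obtain ⟨hgS, hgE⟩ := mem_inter.mp hg
    by_cases hge : g = e
    · subst hge
      rcases hab with hab | hab <;> rw [hab] at hreach
      exacts [hnr hreach, hnr hreach.symm]
    · refine hnr (EqvGen.rel _ _ ⟨g, mem_inter.mpr ⟨?_, hgE⟩, hab⟩)
      simp only [mem_sdiff, mem_insert] at hgS ⊢
      tauto
  · intro hnr
    refine ⟨⟨_, hends.1⟩, ⟨_, hends.2⟩, ⟨e, mem_inter.mpr ⟨he, heE⟩, Or.inl rfl⟩, ?_⟩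
    rwa [eqvGen_adjOn_subtype_iff]

theorem mem_bridges {S : Finset ℕ} {e : ℕ} : e ∈ G.bridges S ↔ G.IsBridge S e :=
  ⟨fun h => (mem_filter.mp h).2, fun h => mem_filter.mpr ⟨h.1, h⟩⟩

theorem not_isBridge_of_mem {S : Finset ℕ} {e : ℕ} (he : e ∈ S) : ¬G.IsBridge S e :=
  fun h => (mem_sdiff.mp h.1).2 he

theorem IsBridge.mono {T S : Finset ℕ} {e : ℕ} (h : G.IsBridge T e) (hTS : T ⊆ S) (he : e ∉ S) :
    G.IsBridge S e := by
  rw [isBridge_iff] at h ⊢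
  refine ⟨mem_sdiff.mpr ⟨(mem_sdiff.mp h.1).1, he⟩, fun hreach => h.2 (hreach.mono ?_)⟩
  exact sdiff_subset_sdiff subset_rfl (insert_subset_insert e hTS)

theorem Reach.of_insert {F : Finset ℕ} {f u v : ℕ} (h : G.Reach (insert f F) u v) :
    G.Reach F u v ∨ (G.Reach F u (G.ends f).1 ∧ G.Reach F (G.ends f).2 v) ∨
      (G.Reach F u (G.ends f).2 ∧ G.Reach F (G.ends f).1 v) := by
  induction h with
  | rel a b hab =>
    obtain ⟨g, hg, hends⟩ := hab
    obtain ⟨hgF, hgE⟩ := mem_inter.mp hg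
    rcases mem_insert.mp hgF with rfl | hgF
    · rcases hends with hends | hends <;> rw [hends]
      exacts [Or.inr (Or.inl ⟨.refl _ _, .refl _ _⟩), Or.inr (Or.inr ⟨.refl _ _, .refl _ _⟩)]
    · exact Or.inl (EqvGen.rel _ _ ⟨g, mem_inter.mpr ⟨hgF, hgE⟩, hends⟩)
  | refl a => exact Or.inl (.refl _ _)
  -- As equalities of classes in `Quot (G.adjOn F)`, these cases are pure congruence closure.
  | symm a b _ ih => simp only [Reach, ← Quot.eq] at ih ⊢; grind
  | trans a b c _ _ ih₁ ih₂ => simp only [Reach, ← Quot.eq] at ih₁ ih₂ ⊢; grind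

theorem not_isBridge_insert {S : Finset ℕ} {e f : ℕ} (hf : G.IsBridge S f) (hef : e ≠ f)
    (he : ¬G.IsBridge S e) : ¬G.IsBridge (insert f S) e := by
  rw [isBridge_iff] at hf he ⊢
  rintro ⟨heS, hnreach⟩
  have heS' : e ∈ G.E \ S :=
    mem_sdiff.mpr ⟨(mem_sdiff.mp heS).1, fun h => (mem_sdiff.mp heS).2 (mem_insert_of_mem h)⟩
  have hreach : G.Reach (insert f (G.E \ insert e (insert f S))) (G.ends e).1 (G.ends e).2 := by
    refine (not_not.mp fun h => he ⟨heS', h⟩).mono ?_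
    intro x hx
    simp only [mem_sdiff, mem_insert] at hx ⊢
    tauto
  -- A path joining the ends of `e` through `f` closes, together with `e`, a cycle through `f`.
  have hcycle : G.Reach (G.E \ insert f S) (G.ends e).1 (G.ends e).2 :=
    Reach.of_edge (by simp only [mem_sdiff, mem_insert] at heS' ⊢; tauto) (mem_sdiff.mp heS').1
  have hsub : G.E \ insert e (insert f S) ⊆ G.E \ insert f S :=
    sdiff_subset_sdiff subset_rfl (subset_insert e _)
  rcases hreach.of_insert with h | ⟨h₁, h₂⟩ | ⟨h₁, h₂⟩
  · exact hnreach h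
  · exact hf.2 (((h₁.mono hsub).symm.trans hcycle).trans (h₂.mono hsub).symm)
  · exact hf.2 (((h₂.mono hsub).trans hcycle.symm).trans (h₁.mono hsub))

theorem not_isBridge_union_of_subset_bridges {S B : Finset ℕ} (hB : B ⊆ G.bridges S) {e : ℕ}
    (he : ¬G.IsBridge S e) : ¬G.IsBridge (S ∪ B) e := by
  induction B using Finset.induction_on with
  | empty => simpa using he
  | insert f B hfB ih =>
    rw [insert_subset_iff, mem_bridges] at hB
    rw [union_insert]
    by_cases hef : e = f
    · exact not_isBridge_of_mem (hef ▸ mem_insert_self e _)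
    · have hfSB : f ∉ S ∪ B := by
        simp only [mem_union, not_or]
        exact ⟨(mem_sdiff.mp hB.1.1).2, hfB⟩
      exact not_isBridge_insert (hB.1.mono subset_union_left hfSB) hef (ih hB.2)

theorem not_isBridge_union_bridges (S : Finset ℕ) (e : ℕ) :
    ¬G.IsBridge (S ∪ G.bridges S) e := by
  by_cases he : e ∈ G.bridges S
  · exact not_isBridge_of_mem (mem_union_right S he)
  · exact not_isBridge_union_of_subset_bridges subset_rfl (mt mem_bridges.mpr he)

theorem bridges_subset_E (S : Finset ℕ) : G.bridges S ⊆ G.E :=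
  fun _ he => (mem_sdiff.mp (mem_bridges.mp he).1).1

section Contraction

variable {S₀ : Finset ℕ}

@[simp]
theorem contract_E : (G.contract S₀).E = G.E \ S₀ := rfl

@[simp]
theorem contract_ends (e : ℕ) :
    (G.contract S₀).ends e = (G.crep S₀ (G.ends e).1, G.crep S₀ (G.ends e).2) := rfl

theorem reach_crep (v : ℕ) : G.Reach S₀ (G.crep S₀ v) v :=
  Nat.sInf_mem (s := {u | EqvGen (G.conRel S₀) u v}) ⟨v, EqvGen.refl v⟩

theorem crep_eq_crep_iff {u v : ℕ} : G.crep S₀ u = G.crep S₀ v ↔ G.Reach S₀ u v := by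
  refine ⟨fun h => (h ▸ (reach_crep u).symm).trans (reach_crep v), fun h => ?_⟩
  unfold crep
  congr 1
  ext x
  exact ⟨fun hx => Reach.trans hx h, fun hx => Reach.trans hx h.symm⟩

theorem crep_crep (v : ℕ) : G.crep S₀ (G.crep S₀ v) = G.crep S₀ v :=
  crep_eq_crep_iff.mpr (reach_crep v)

theorem crep_mem {v : ℕ} (hv : v ∈ G.V) : G.crep S₀ v ∈ G.V := by
  rcases (reach_crep (S₀ := S₀) v).eq_or_subtype (p := (· ∈ G.V))
    (fun _ _ h => adjOn_mem h) with h | ⟨h, -⟩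
  · rwa [h]
  · exact h

theorem contract_V_subset : (G.contract S₀).V ⊆ G.V := by
  intro v hv
  obtain ⟨u, hu, rfl⟩ := mem_image.mp hv
  exact crep_mem hu

/-- `crep` and the inclusion `V(G/S₀) ⊆ V(G)` induce mutually inverse bijections between the
components. -/
theorem ncomp_contract (F : Finset ℕ) :
    (G.contract S₀).ncomp (G.contract S₀).V F = G.ncomp G.V (F ∪ S₀) := by
  symm
  refine Quot.card_eq_of_retract (fun a => ⟨G.crep S₀ a, mem_image_of_mem _ a.2⟩)
    (fun b => ⟨b, contract_V_subset b.2⟩) ?_ ?_ ?_ ?_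
  · rintro a a' ⟨g, hg, hends⟩
    obtain ⟨hgFS, hgE⟩ := mem_inter.mp hg
    by_cases hgS : g ∈ S₀
    · have : G.crep S₀ a = G.crep S₀ a' :=
        crep_eq_crep_iff.mpr (EqvGen.rel _ _ ⟨g, mem_inter.mpr ⟨hgS, hgE⟩, hends⟩)
      simp only [this]
      exact EqvGen.refl _
    · refine EqvGen.rel _ _ ⟨g, ?_, ?_⟩
      · simp only [mem_inter, mem_union, contract_E, mem_sdiff] at hgFS ⊢
        tauto
      · rcases hends with hends | hends <;> simp [hends]
  · rintro b b' ⟨g, hg, hends⟩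
    simp only [mem_inter, contract_E, mem_sdiff, contract_ends] at hg hends
    rw [eqvGen_adjOn_subtype_iff]
    have hcrep (v : ℕ) : G.Reach (F ∪ S₀) (G.crep S₀ v) v := (reach_crep v).mono subset_union_right
    have hedge := Reach.of_edge (mem_union_left S₀ hg.1) hg.2.1
    rcases hends with hends | hends <;> rw [Prod.ext_iff] at hends <;>
      simp only at hends <;> rw [← hends.1, ← hends.2]
    · exact ((hcrep _).trans hedge).trans (hcrep _).symm
    · exact ((hcrep _).trans hedge.symm).trans (hcrep _).symm
  · intro a
    rw [eqvGen_adjOn_subtype_iff]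
    exact (reach_crep a.1).mono subset_union_right
  · intro b
    obtain ⟨u, -, hu⟩ := mem_image.mp b.2
    exact Subtype.ext (by simp only [← hu, crep_crep])

theorem ncomp_contract_sdiff {T : Finset ℕ} (hT : Disjoint T S₀) :
    (G.contract S₀).ncomp (G.contract S₀).V ((G.contract S₀).E \ T) = G.ncomp G.V (G.E \ T) := by
  rw [ncomp_contract]
  refine ncomp_congr _ (ext fun x => ?_)
  have : x ∈ T → x ∉ S₀ := fun h => disjoint_left.mp hT h
  simp only [contract_E, mem_inter, mem_union, mem_sdiff]
  tauto

theorem contract_isBridge_iff {T : Finset ℕ} {e : ℕ} (hT : Disjoint T S₀) (he : e ∉ S₀) :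
    (G.contract S₀).IsBridge T e ↔ G.IsBridge T e := by
  unfold IsBridge
  rw [ncomp_contract_sdiff hT, ncomp_contract_sdiff (disjoint_insert_left.mpr ⟨he, hT⟩)]
  simp only [contract_E, mem_sdiff, he, not_false_eq_true, and_true]

end Contraction

theorem ab_zero_iff {S : Finset ℕ} : G.Ab 0 S ↔ S ⊆ G.E ∧ ∀ e, ¬G.IsBridge S e := by
  simp [Ab]

theorem ab_one_iff {S : Finset ℕ} : G.Ab 1 S ↔ S ⊆ G.E ∧ G.ConnSub G.V (G.E \ S) := by
  simp [Ab]

@[simp]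
theorem pullStar_zero (T : Finset ℕ) : G.pullStar 0 T = T ∪ G.bridges T := if_pos rfl

@[simp]
theorem pullStar_one (T : Finset ℕ) : G.pullStar 1 T = T := if_neg one_ne_zero

theorem subset_pullStar (b : ℕ) (T : Finset ℕ) : T ⊆ G.pullStar b T := by
  unfold pullStar
  split_ifs
  exacts [subset_union_left, subset_rfl]

section Ab

variable {b : ℕ} {S₀ : Finset ℕ}

theorem Ab.sdiff_contract (hb : b = 0 ∨ b = 1) {S : Finset ℕ} (hS : G.Ab b S) :
    (G.contract S₀).Ab b (S \ S₀) := by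
  have hdisj : Disjoint (S \ S₀) S₀ := sdiff_disjoint
  rcases hb with rfl | rfl
  · rw [ab_zero_iff] at hS ⊢
    refine ⟨sdiff_subset_sdiff hS.1 subset_rfl, fun e he => ?_⟩
    have heS₀ : e ∉ S₀ := (mem_sdiff.mp (mem_sdiff.mp he.1).1).2
    have heS : e ∉ S := fun h => (mem_sdiff.mp he.1).2 (mem_sdiff.mpr ⟨h, heS₀⟩)
    exact hS.2 e (((contract_isBridge_iff hdisj heS₀).mp he).mono sdiff_subset heS)
  · rw [ab_one_iff] at hS ⊢
    refine ⟨sdiff_subset_sdiff hS.1 subset_rfl, ?_⟩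
    rw [ConnSub, ncomp_contract_sdiff hdisj]
    exact hS.2.mono (sdiff_subset_sdiff subset_rfl sdiff_subset)

theorem bridges_subset_of_ab_zero_contract {T : Finset ℕ} (hT : (G.contract S₀).Ab 0 T) :
    G.bridges T ⊆ S₀ := by
  rw [ab_zero_iff] at hT
  intro e he
  by_contra heS₀
  exact hT.2 e ((contract_isBridge_iff (subset_sdiff.mp hT.1).2 heS₀).mpr (mem_bridges.mp he))

theorem ab_pullStar (hb : b = 0 ∨ b = 1) {T : Finset ℕ} (hT : (G.contract S₀).Ab b T) :
    G.Ab b (G.pullStar b T) := by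
  have hTE := subset_sdiff.mp hT.1
  rcases hb with rfl | rfl
  · rw [pullStar_zero, ab_zero_iff]
    exact ⟨union_subset hTE.1 (bridges_subset_E T), not_isBridge_union_bridges T⟩
  · rw [ab_one_iff] at hT ⊢
    rw [pullStar_one, ConnSub, ← ncomp_contract_sdiff hTE.2]
    exact ⟨hTE.1, hT.2⟩

theorem pullStar_sdiff (hb : b = 0 ∨ b = 1) {T : Finset ℕ} (hT : (G.contract S₀).Ab b T) :
    G.pullStar b T \ S₀ = T := by
  have hTS₀ := (subset_sdiff.mp hT.1).2
  rcases hb with rfl | rfl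
  · rw [pullStar_zero, union_sdiff_distrib, hTS₀.sdiff_eq_left,
      sdiff_eq_empty_iff_subset.mpr (bridges_subset_of_ab_zero_contract hT), union_empty]
  · rw [pullStar_one, hTS₀.sdiff_eq_left]

theorem pullStar_subset (hb : b = 0 ∨ b = 1) {S T : Finset ℕ} (hS : G.Ab b S) (hTS : T ⊆ S) :
    G.pullStar b T ⊆ S := by
  rcases hb with rfl | rfl
  · rw [ab_zero_iff] at hS
    rw [pullStar_zero]
    refine union_subset hTS fun e he => ?_
    by_contra heS
    exact hS.2 e ((mem_bridges.mp he).mono hTS heS)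
  · rwa [pullStar_one]

theorem bridges_empty_subset_of_ab_zero {S : Finset ℕ} (hS : G.Ab 0 S) : G.bridges ∅ ⊆ S := by
  simpa using pullStar_subset (Or.inl rfl) hS (empty_subset S)

theorem disjoint_bridges_empty_of_ab_one {S : Finset ℕ} (hS : G.Ab 1 S) :
    Disjoint S (G.bridges ∅) := by
  rw [ab_one_iff, connSub_iff] at hS
  refine disjoint_left.mpr fun e heS he => ?_
  have hbr := isBridge_iff.mp (mem_bridges.mp he)
  have hends := G.ends_mem e (mem_sdiff.mp hbr.1).1
  refine hbr.2 ((hS.2.2 _ hends.1 _ hends.2).mono (sdiff_subset_sdiff subset_rfl ?_))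
  simpa using heS

/-- When `S₀` consists of bridges of `G`, all elements of `A^b_G` meet `S₀` in the same set:
`S₀` itself for `b = 0`, and `∅` for `b = 1`. -/
theorem Ab.subset_of_sdiff_subset (hb : b = 0 ∨ b = 1) (h₀ : S₀ ⊆ G.bridges ∅) {S S' : Finset ℕ}
    (hS : G.Ab b S) (hS' : G.Ab b S') (h : S \ S₀ ⊆ S' \ S₀) : S ⊆ S' := by
  have hinter : S ∩ S₀ ⊆ S' ∩ S₀ := by
    rcases hb with rfl | rfl
    · exact inter_subset_right.trans
        (subset_inter (h₀.trans (bridges_empty_subset_of_ab_zero hS')) subset_rfl)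
    · rw [disjoint_iff_inter_eq_empty.mp ((disjoint_bridges_empty_of_ab_one hS).mono_right h₀)]
      exact empty_subset _
  rw [← sdiff_union_inter S S₀, ← sdiff_union_inter S' S₀]
  exact union_subset_union h hinter

theorem isPosetQuotient_sdiff (hb : b = 0 ∨ b = 1) :
    IsPosetQuotient (G.Ab b) ((G.contract S₀).Ab b)
      (fun S₁ S₂ => S₂ ⊆ S₁) (fun T₁ T₂ => T₂ ⊆ T₁) (fun S₁ => S₁ \ S₀) :=
  ⟨fun _ hS => hS.sdiff_contract hb,
    fun _ _ _ _ h => sdiff_subset_sdiff h subset_rfl,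
    fun _ hT => ⟨_, ab_pullStar hb hT, pullStar_sdiff hb hT⟩,
    fun _ _ hT₁ hT₂ h => ⟨_, _, ab_pullStar hb hT₁, ab_pullStar hb hT₂, pullStar_sdiff hb hT₁,
      pullStar_sdiff hb hT₂,
      pullStar_subset hb (ab_pullStar hb hT₁) (h.trans (subset_pullStar b _))⟩⟩

end Ab

end WGraph

theorem pushforward_pullback_adjunction_general (G : WGraph) (b : ℕ) (hb : b = 0 ∨ b = 1)
    (S₀ : Finset ℕ)
    (S : Finset ℕ) (hS : G.Ab b S) (T : Finset ℕ) (hT : (G.contract S₀).Ab b T) :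
    (G.pullStar b T \ S₀ = T) ∧
    (T ⊆ S \ S₀ ↔ G.pullStar b T ⊆ S) ∧
    (G.Ab b (G.pullStar b T) ∧
      ∀ S', G.Ab b S' → S' \ S₀ = T → G.pullStar b T ⊆ S') ∧
    IsPosetQuotient (G.Ab b) ((G.contract S₀).Ab b)
      (fun S₁ S₂ => S₂ ⊆ S₁) (fun T₁ T₂ => T₂ ⊆ T₁) (fun S₁ => S₁ \ S₀) ∧
    (S₀ ⊆ G.bridges ∅ →
      (∀ T', (G.contract S₀).Ab b T' → ∃! S', G.Ab b S' ∧ S' \ S₀ = T') ∧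
      (∀ S' S'', G.Ab b S' → G.Ab b S'' → (S'' ⊆ S' ↔ S'' \ S₀ ⊆ S' \ S₀))) := by
  have hTS₀ : Disjoint T S₀ := (subset_sdiff.mp hT.1).2
  refine ⟨WGraph.pullStar_sdiff hb hT, ?_, ⟨WGraph.ab_pullStar hb hT, ?_⟩,
    WGraph.isPosetQuotient_sdiff hb, fun h₀ => ⟨?_, ?_⟩⟩
  · exact ⟨fun h => WGraph.pullStar_subset hb hS (h.trans sdiff_subset),
      fun h => subset_sdiff.mpr ⟨(G.subset_pullStar b T).trans h, hTS₀⟩⟩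
  · rintro S' hS' rfl
    exact WGraph.pullStar_subset hb hS' sdiff_subset
  · intro T' hT'
    refine ⟨_, ⟨WGraph.ab_pullStar hb hT', WGraph.pullStar_sdiff hb hT'⟩, ?_⟩
    rintro S' ⟨hS', rfl⟩
    refine subset_antisymm (hS'.subset_of_sdiff_subset hb h₀ (WGraph.ab_pullStar hb hT') ?_)
      (WGraph.pullStar_subset hb hS' sdiff_subset)
    rw [WGraph.pullStar_sdiff hb hT']
  · exact fun S' S'' hS' hS'' => ⟨fun h => sdiff_subset_sdiff h subset_rfl,
      hS''.subset_of_sdiff_subset hb h₀ hS'⟩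

/-- For a contraction `γ : G → H = G/S₀`, `S ∈ A^b_G`,
`T ∈ A^b_H`: (a) `γ_* γ* T = T`; (b) `T ⊆ γ_* S ↔ γ* T ⊆ S`; (c) `γ* T` is
the smallest element of `A^b_G` pushing forward to `T`; (d) `γ_*` is a
quotient of posets; (e) if `S₀ ⊆ G_br` then `γ_*` is an isomorphism of
posets. -/
theorem pushforward_pullback_adjunction (G : WGraph) (b : ℕ) (hb : b = 0 ∨ b = 1)
    (S₀ : Finset ℕ) (hS₀ : S₀ ⊆ G.E)
    (S : Finset ℕ) (hS : G.Ab b S) (T : Finset ℕ) (hT : (G.contract S₀).Ab b T) :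
    (G.pullStar b T \ S₀ = T) ∧
    (T ⊆ S \ S₀ ↔ G.pullStar b T ⊆ S) ∧
    (G.Ab b (G.pullStar b T) ∧
      ∀ S', G.Ab b S' → S' \ S₀ = T → G.pullStar b T ⊆ S') ∧
    IsPosetQuotient (G.Ab b) ((G.contract S₀).Ab b)
      (fun S₁ S₂ => S₂ ⊆ S₁) (fun T₁ T₂ => T₂ ⊆ T₁) (fun S₁ => S₁ \ S₀) ∧
    (S₀ ⊆ G.bridges ∅ →
      (∀ T', (G.contract S₀).Ab b T' → ∃! S', G.Ab b S' ∧ S' \ S₀ = T') ∧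
      (∀ S' S'', G.Ab b S' → G.Ab b S'' → (S'' ⊆ S' ↔ S'' \ S₀ ⊆ S' \ S₀))) :=
  pushforward_pullback_adjunction_general G b hb S₀ S hS T hT
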